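/- Under assumption (iii) (single-world pairwise independences: for each i ∈ {1,…,K} and j ∈ {0,1}, Z is independent of the pair (X(z_i), Y(x_j))), for every z ∈ {1,…,K}, every i, y, ỹ ∈ {0,1}, both inequalities hold: P(Y(x_i) = y) ≤ P(Y = y, X = i | Z = z) + P(X = 1−i | Z = z), and P(Y(x_0) = y, Y(x_1) = ỹ) ≤ P(Y = y, X = 0 | Z = z) + P(Y = ỹ, X = 1 | Z = z). -/
import Mathlib


open MeasureTheory ProbabilityTheory

private lemma fin2_cases (a b : Fin 2) : a = b ∨ a = 1 - b := by
  fin_cases a <;> fin_cases b <;> simp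

private lemma cond_eq_aux {Ω : Type*} [MeasurableSpace Ω] (P : Measure Ω)
    [IsProbabilityMeasure P] {s t u : Set Ω} (hs : MeasurableSet s) (hne : P s ≠ 0)
    (htu : s ∩ t = s ∩ u) (h : P (s ∩ u) = P s * P u) : P[|s] t = P u := by
  rw [ProbabilityTheory.cond_apply hs, htu, h, ← mul_assoc,
    ENNReal.inv_mul_cancel hne (measure_ne_top P s), one_mul]

/-- Under assumption (iii) (single-world pairwise independences: for each
`i ∈ {1,…,K}` and `j ∈ {0,1}`, `Z` is independent of the pair `(X(zᵢ), Y(xⱼ))`), for every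
`z ∈ {1,…,K}` and all `i, y, ỹ ∈ {0,1}`, both inequalities hold:
`P(Y(xᵢ) = y) ≤ P(Y = y, X = i | Z = z) + P(X = 1−i | Z = z)`, and
`P(Y(x₀) = y, Y(x₁) = ỹ) ≤ P(Y = y, X = 0 | Z = z) + P(Y = ỹ, X = 1 | Z = z)`. -/
theorem stmt3
    {Ω : Type*} [MeasurableSpace Ω] (P : Measure Ω) [IsProbabilityMeasure P]
    (K : ℕ) (hK : 1 ≤ K)
    (Z : Ω → Fin K) (Xz : Fin K → Ω → Fin 2) (Y0 Y1 : Ω → Fin 2)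
    (hZ : Measurable Z) (hXz : ∀ z, Measurable (Xz z))
    (hY0 : Measurable Y0) (hY1 : Measurable Y1)
    (X : Ω → Fin 2) (hX : ∀ ω, X ω = Xz (Z ω) ω)
    (Y : Ω → Fin 2) (hY : ∀ ω, Y ω = if X ω = 0 then Y0 ω else Y1 ω)
    (hpos : ∀ z, 0 < P (Z ⁻¹' {z}))
    (hindep : ∀ (i : Fin K) (j : Fin 2),
      IndepFun Z (fun ω => (Xz i ω, if j = 0 then Y0 ω else Y1 ω)) P) :
    ∀ (z : Fin K) (i y ytilde : Fin 2),
      ((P {ω | (if i = 0 then Y0 ω else Y1 ω) = y}).toReal ≤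
        (P[|Z ⁻¹' {z}] {ω | Y ω = y ∧ X ω = i}).toReal +
          (P[|Z ⁻¹' {z}] {ω | X ω = 1 - i}).toReal) ∧
      ((P {ω | Y0 ω = y ∧ Y1 ω = ytilde}).toReal ≤
        (P[|Z ⁻¹' {z}] {ω | Y ω = y ∧ X ω = 0}).toReal +
          (P[|Z ⁻¹' {z}] {ω | Y ω = ytilde ∧ X ω = 1}).toReal) := by
  intro z i y ytilde
  have hzs : MeasurableSet (Z ⁻¹' {z}) := hZ (measurableSet_singleton z)
  have hzne : P (Z ⁻¹' {z}) ≠ 0 := (hpos z).ne'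
  -- product formula for pair-preimage events
  have hprod : ∀ (j : Fin 2) (T : Set (Fin 2 × Fin 2)),
      P (Z ⁻¹' {z} ∩ (fun ω => (Xz z ω, if j = 0 then Y0 ω else Y1 ω)) ⁻¹' T)
        = P (Z ⁻¹' {z}) * P ((fun ω => (Xz z ω, if j = 0 then Y0 ω else Y1 ω)) ⁻¹' T) := by
    intro j T
    exact (hindep z j).measure_inter_preimage_eq_mul {z} T (measurableSet_singleton z)
      (MeasurableSet.of_discrete)
  -- a convenient abbreviation for "on Z = z, X agrees with Xz z"
  have hXeq : ∀ ω, Z ω = z → X ω = Xz z ω := by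
    intro ω h; rw [hX, h]
  -- FIRST INEQUALITY
  have h1 : P[|Z ⁻¹' {z}] {ω | Y ω = y ∧ X ω = i}
      = P {ω | Xz z ω = i ∧ (if i = 0 then Y0 ω else Y1 ω) = y} := by
    have hT : (fun ω => (Xz z ω, if i = 0 then Y0 ω else Y1 ω)) ⁻¹' ({i} ×ˢ {y})
        = {ω | Xz z ω = i ∧ (if i = 0 then Y0 ω else Y1 ω) = y} := by
      ext ω; simp [Set.mem_prod]
    refine cond_eq_aux P hzs hzne ?_ ?_
    · ext ω
      simp only [Set.mem_inter_iff, Set.mem_preimage, Set.mem_singleton_iff, Set.mem_setOf_eq]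
      constructor
      · rintro ⟨hz, hy', hx⟩
        refine ⟨hz, ?_, ?_⟩
        · rw [← hXeq ω hz]; exact hx
        · rw [← hy', hY ω, hx]
      · rintro ⟨hz, hx, hy'⟩
        have hx' : X ω = i := by rw [hXeq ω hz]; exact hx
        exact ⟨hz, by rw [hY ω, hx']; exact hy', hx'⟩
    · rw [← hT]; exact hprod i _
  have h2 : P[|Z ⁻¹' {z}] {ω | X ω = 1 - i} = P {ω | Xz z ω = 1 - i} := by
    have hT : (fun ω => (Xz z ω, if i = 0 then Y0 ω else Y1 ω)) ⁻¹' ({1 - i} ×ˢ Set.univ)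
        = {ω | Xz z ω = 1 - i} := by
      ext ω; simp [Set.mem_prod, eq_comm]
    refine cond_eq_aux P hzs hzne ?_ ?_
    · ext ω
      simp only [Set.mem_inter_iff, Set.mem_setOf_eq]
      constructor
      · rintro ⟨hz, hx⟩; exact ⟨hz, by rw [← hXeq ω hz]; exact hx⟩
      · rintro ⟨hz, hx⟩; exact ⟨hz, by rw [hXeq ω hz]; exact hx⟩
    · rw [← hT]; exact hprod i _
  have hsub1 : {ω | (if i = 0 then Y0 ω else Y1 ω) = y}
      ⊆ {ω | Xz z ω = i ∧ (if i = 0 then Y0 ω else Y1 ω) = y} ∪ {ω | Xz z ω = 1 - i} := by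
    intro ω hω
    rcases fin2_cases (Xz z ω) i with h | h
    · exact Or.inl ⟨h, hω⟩
    · exact Or.inr h
  -- SECOND INEQUALITY
  have h3 : P[|Z ⁻¹' {z}] {ω | Y ω = y ∧ X ω = 0}
      = P {ω | Xz z ω = 0 ∧ Y0 ω = y} := by
    have hT : (fun ω => (Xz z ω, if (0 : Fin 2) = 0 then Y0 ω else Y1 ω)) ⁻¹' ({0} ×ˢ {y})
        = {ω | Xz z ω = 0 ∧ Y0 ω = y} := by
      ext ω; simp [Set.mem_prod]
    refine cond_eq_aux P hzs hzne ?_ ?_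
    · ext ω
      simp only [Set.mem_inter_iff, Set.mem_setOf_eq]
      constructor
      · rintro ⟨hz, hy', hx⟩
        have hx' : Xz z ω = 0 := by rw [← hXeq ω hz]; exact hx
        refine ⟨hz, hx', ?_⟩
        rw [← hy', hY ω, if_pos hx]
      · rintro ⟨hz, hx, hy'⟩
        have hx' : X ω = 0 := by rw [hXeq ω hz]; exact hx
        exact ⟨hz, by rw [hY ω, if_pos hx']; exact hy', hx'⟩
    · rw [← hT]; exact hprod 0 _
  have h4 : P[|Z ⁻¹' {z}] {ω | Y ω = ytilde ∧ X ω = 1}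
      = P {ω | Xz z ω = 1 ∧ Y1 ω = ytilde} := by
    have hT : (fun ω => (Xz z ω, if (1 : Fin 2) = 0 then Y0 ω else Y1 ω)) ⁻¹' ({1} ×ˢ {ytilde})
        = {ω | Xz z ω = 1 ∧ Y1 ω = ytilde} := by
      ext ω; simp [Set.mem_prod]
    refine cond_eq_aux P hzs hzne ?_ ?_
    · ext ω
      simp only [Set.mem_inter_iff, Set.mem_setOf_eq]
      constructor
      · rintro ⟨hz, hy', hx⟩
        have hx' : Xz z ω = 1 := by rw [← hXeq ω hz]; exact hx
        refine ⟨hz, hx', ?_⟩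
        rw [← hy', hY ω, if_neg (by rw [hx]; decide)]
      · rintro ⟨hz, hx, hy'⟩
        have hx' : X ω = 1 := by rw [hXeq ω hz]; exact hx
        exact ⟨hz, by rw [hY ω, if_neg (by rw [hx']; decide)]; exact hy', hx'⟩
    · rw [← hT]; exact hprod 1 _
  have hsub2 : {ω | Y0 ω = y ∧ Y1 ω = ytilde}
      ⊆ {ω | Xz z ω = 0 ∧ Y0 ω = y} ∪ {ω | Xz z ω = 1 ∧ Y1 ω = ytilde} := by
    intro ω hω
    rcases fin2_cases (Xz z ω) 0 with h | h
    · exact Or.inl ⟨h, hω.1⟩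
    · exact Or.inr ⟨by simpa using h, hω.2⟩
  constructor
  · rw [h1, h2]
    have hle := (measure_mono (μ := P) hsub1).trans (measure_union_le
      {ω | Xz z ω = i ∧ (if i = 0 then Y0 ω else Y1 ω) = y} {ω | Xz z ω = 1 - i})
    rw [← ENNReal.toReal_add (measure_ne_top P _) (measure_ne_top P _)]
    exact ENNReal.toReal_mono (ENNReal.add_ne_top.2 ⟨measure_ne_top P _, measure_ne_top P _⟩) hle
  · rw [h3, h4]
    have hle := (measure_mono (μ := P) hsub2).trans (measure_union_le
      {ω | Xz z ω = 0 ∧ Y0 ω = y} {ω | Xz z ω = 1 ∧ Y1 ω = ytilde})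
    rw [← ENNReal.toReal_add (measure_ne_top P _) (measure_ne_top P _)]
    exact ENNReal.toReal_mono (ENNReal.add_ne_top.2 ⟨measure_ne_top P _, measure_ne_top P _⟩) hle
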